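/- arXiv:2403.16088 — 2 statements merged into one kernel-verified Lean document; each statement's English description precedes it below -/
import Mathlib

section
/- Let G be a geometric graph in which every two distinct crossings are vertex-disjoint (independent crossings). Suppose there is a graph homomorphism α from the underlying abstract graph of G to Kₙ such that no two edges of G that cross are mapped by α to the same edge of Kₙ. Then X(G) ≤ 2n. -/
/-- An abstract geometric graph: a simple graph together with a symmetric
crossing relation on (unordered) edges such that crossing edges share no endpoint. -/
structure GeomGraph (V : Type*) where
  G : SimpleGraph V
  cross : Sym2 V → Sym2 V → Prop
  cross_symm : ∀ e₁ e₂, cross e₁ e₂ → cross e₂ e₁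
  cross_mem : ∀ e₁ e₂, cross e₁ e₂ → e₁ ∈ G.edgeSet ∧ e₂ ∈ G.edgeSet
  cross_disjoint : ∀ e₁ e₂, cross e₁ e₂ → ∀ v, v ∈ e₁ → v ∉ e₂

/-- A geometric homomorphism: preserves adjacency and crossings. -/
def IsGeomHom {V W : Type*} (A : GeomGraph V) (B : GeomGraph W) (f : V → W) : Prop :=
  (∀ u v, A.G.Adj u v → B.G.Adj (f u) (f v)) ∧
  ∀ e₁ e₂, A.cross e₁ e₂ → B.cross (Sym2.map f e₁) (Sym2.map f e₂)

/-- A geometric realization of the complete graph `K_n`: the complete graph on `Fin n`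
together with the crossing relation induced by a straight-line drawing on `n` points
in general position in the plane. -/
def IsRealizationOfK (n : ℕ) (K : GeomGraph (Fin n)) : Prop :=
  K.G = ⊤ ∧ ∃ p : Fin n → ℝ × ℝ,
    Function.Injective p ∧
    (∀ i j k : Fin n, i ≠ j → j ≠ k → i ≠ k →
      ¬ Collinear ℝ ({p i, p j, p k} : Set (ℝ × ℝ))) ∧
    ∀ a b c d : Fin n, a ≠ b → c ≠ d →
      (K.cross s(a, b) s(c, d) ↔
        a ≠ c ∧ a ≠ d ∧ b ≠ c ∧ b ≠ d ∧
          (openSegment ℝ (p a) (p b) ∩ openSegment ℝ (p c) (p d)).Nonempty)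

/-- The set of `n` such that there is a geometric homomorphism from `A` to some
geometric realization of `K_n`. -/
def geoSet {V : Type*} (A : GeomGraph V) : Set ℕ :=
  {n | ∃ K : GeomGraph (Fin n), IsRealizationOfK n K ∧ ∃ f : V → Fin n, IsGeomHom A K f}

/-- The geochromatic number `X(A)`. -/
noncomputable def geoChrom {V : Type*} (A : GeomGraph V) : ℕ := sInf (geoSet A)

/-- The set of `n` admitting a pseudo-geochromatic `n`-coloring. -/
def pseudoSet {V : Type*} (A : GeomGraph V) : Set ℕ :=
  {n | ∃ c : V → Fin n,
    (∀ u v, A.G.Adj u v → c u ≠ c v) ∧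
    ∀ a b x y : V, A.cross s(a, b) s(x, y) →
      c a ≠ c b ∧ c a ≠ c x ∧ c a ≠ c y ∧ c b ≠ c x ∧ c b ≠ c y ∧ c x ≠ c y}

/-- The pseudo-geochromatic number `X'(A)`. -/
noncomputable def pseudoChrom {V : Type*} (A : GeomGraph V) : ℕ := sInf (pseudoSet A)

/-- All distinct crossings of `A` are vertex-disjoint (independent crossings). -/
def IndepCrossings {V : Type*} (A : GeomGraph V) : Prop :=
  ∀ e₁ e₂ f₁ f₂, A.cross e₁ e₂ → A.cross f₁ f₂ →
    ¬ ((e₁ = f₁ ∧ e₂ = f₂) ∨ (e₁ = f₂ ∧ e₂ = f₁)) →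
    ∀ u, (u ∈ e₁ ∨ u ∈ e₂) → ¬ (u ∈ f₁ ∨ u ∈ f₂)

def rho (n c t : ℕ) : ℕ := if t < c then t + n - c else t - c

def hbit (n P Q r s : ℕ) : ℕ :=
  if P = r ∨ P = s then
    (if rho n P (if P = min r s then max r s else min r s) < rho n P Q then 1 else 0)
  else if Q = r ∨ Q = s then
    (if Q < P then 1 else 0)
  else
    (if Q < P ∧ ((min r s < min P Q ∧ max P Q < max r s) ∨ max P Q < min r s ∨ max r s < min P Q)
      then 1 else 0)

lemma hbit_le_one (n P Q r s : ℕ) : hbit n P Q r s ≤ 1 := by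
  unfold hbit; split_ifs <;> omega

def NCross (i j k l : ℕ) : Prop :=
  (min i j < min k l ∧ min k l < max i j ∧ max i j < max k l) ∨
  (min k l < min i j ∧ min i j < max k l ∧ max k l < max i j)

set_option maxHeartbeats 2000000 in
lemma hbit_core (n A B X Y : ℕ) (hA : A < n) (hB : B < n) (hX : X < n) (hY : Y < n)
    (hAB : A < B) (hXY : X < Y) (hAX : A ≤ X) (h1 : ¬(A = X ∧ B = Y)) :
    NCross (A + n * hbit n A B X Y) (B + n * hbit n B A X Y)
           (X + n * hbit n X Y A B) (Y + n * hbit n Y X A B) := by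
  rcases eq_or_lt_of_le hAX with hax | hax
  · -- A = X, shared min color
    have hBY : B ≠ Y := fun h => h1 ⟨hax, h⟩
    rcases hBY.lt_or_gt with h | h
    · have e1 : hbit n A B X Y = 0 := by unfold hbit rho; split_ifs <;> omega
      have e2 : hbit n B A X Y = 1 := by unfold hbit rho; split_ifs <;> omega
      have e3 : hbit n X Y A B = 1 := by unfold hbit rho; split_ifs <;> omega
      have e4 : hbit n Y X A B = 1 := by unfold hbit rho; split_ifs <;> omega
      rw [e1, e2, e3, e4]; unfold NCross; omega
    · have e1 : hbit n A B X Y = 1 := by unfold hbit rho; split_ifs <;> omega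
      have e2 : hbit n B A X Y = 1 := by unfold hbit rho; split_ifs <;> omega
      have e3 : hbit n X Y A B = 0 := by unfold hbit rho; split_ifs <;> omega
      have e4 : hbit n Y X A B = 1 := by unfold hbit rho; split_ifs <;> omega
      rw [e1, e2, e3, e4]; unfold NCross; omega
  · rcases eq_or_ne B X with hbx | hbx
    · -- B = X shared
      have e1 : hbit n A B X Y = 0 := by unfold hbit rho; split_ifs <;> omega
      have e2 : hbit n B A X Y = 1 := by unfold hbit rho; split_ifs <;> omega
      have e3 : hbit n X Y A B = 0 := by unfold hbit rho; split_ifs <;> omega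
      have e4 : hbit n Y X A B = 1 := by unfold hbit rho; split_ifs <;> omega
      rw [e1, e2, e3, e4]; unfold NCross; omega
    · rcases eq_or_ne B Y with hby | hby
      · -- B = Y shared
        have e1 : hbit n A B X Y = 0 := by unfold hbit rho; split_ifs <;> omega
        have e2 : hbit n B A X Y = 0 := by unfold hbit rho; split_ifs <;> omega
        have e3 : hbit n X Y A B = 0 := by unfold hbit rho; split_ifs <;> omega
        have e4 : hbit n Y X A B = 1 := by unfold hbit rho; split_ifs <;> omega
        rw [e1, e2, e3, e4]; unfold NCross; omega
      · -- four distinct colors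
        rcases lt_trichotomy B X with h | h | h
        · -- disjoint : A < B < X < Y
          have e1 : hbit n A B X Y = 0 := by unfold hbit rho; split_ifs <;> omega
          have e2 : hbit n B A X Y = 1 := by unfold hbit rho; split_ifs <;> omega
          have e3 : hbit n X Y A B = 0 := by unfold hbit rho; split_ifs <;> omega
          have e4 : hbit n Y X A B = 1 := by unfold hbit rho; split_ifs <;> omega
          rw [e1, e2, e3, e4]; unfold NCross; omega
        · exact absurd h hbx
        · rcases lt_trichotomy B Y with h' | h' | h'
          · -- interleaved : A < X < B < Y
            have e1 : hbit n A B X Y = 0 := by unfold hbit rho; split_ifs <;> omega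
            have e2 : hbit n B A X Y = 0 := by unfold hbit rho; split_ifs <;> omega
            have e3 : hbit n X Y A B = 0 := by unfold hbit rho; split_ifs <;> omega
            have e4 : hbit n Y X A B = 0 := by unfold hbit rho; split_ifs <;> omega
            rw [e1, e2, e3, e4]; unfold NCross; omega
          · exact absurd h' hby
          · -- nested : A < X < Y < B
            have e1 : hbit n A B X Y = 0 := by unfold hbit rho; split_ifs <;> omega
            have e2 : hbit n B A X Y = 0 := by unfold hbit rho; split_ifs <;> omega
            have e3 : hbit n X Y A B = 0 := by unfold hbit rho; split_ifs <;> omega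
            have e4 : hbit n Y X A B = 1 := by unfold hbit rho; split_ifs <;> omega
            rw [e1, e2, e3, e4]; unfold NCross; omega

lemma NCross_comm {i j k l : ℕ} (h : NCross i j k l) : NCross k l i j := by
  unfold NCross at *; omega

lemma NCross_swap₁ {i j k l : ℕ} (h : NCross i j k l) : NCross j i k l := by
  unfold NCross at *; omega

lemma NCross_swap₂ {i j k l : ℕ} (h : NCross i j k l) : NCross i j l k := by
  unfold NCross at *; omega

lemma hpos_cross (n A B X Y : ℕ) (hA : A < n) (hB : B < n) (hX : X < n) (hY : Y < n)
    (hAB : A ≠ B) (hXY : X ≠ Y) (h1 : ¬(A = X ∧ B = Y)) (h2 : ¬(A = Y ∧ B = X)) :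
    NCross (A + n * hbit n A B (min X Y) (max X Y)) (B + n * hbit n B A (min X Y) (max X Y))
           (X + n * hbit n X Y (min A B) (max A B)) (Y + n * hbit n Y X (min A B) (max A B)) := by
  rcases hAB.lt_or_gt with hab | hab <;> rcases hXY.lt_or_gt with hxy | hxy
  · -- A < B, X < Y
    rw [min_eq_left hxy.le, max_eq_right hxy.le, min_eq_left hab.le, max_eq_right hab.le]
    rcases le_total A X with hax | hax
    · exact hbit_core n A B X Y hA hB hX hY hab hxy hax h1
    · exact NCross_comm (hbit_core n X Y A B hX hY hA hB hxy hab hax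
        (fun h => h1 ⟨h.1.symm, h.2.symm⟩))
  · -- A < B, Y < X
    rw [min_eq_right hxy.le, max_eq_left hxy.le, min_eq_left hab.le, max_eq_right hab.le]
    rcases le_total A Y with hax | hax
    · exact NCross_swap₂ (hbit_core n A B Y X hA hB hY hX hab hxy hax
        (fun h => h2 ⟨h.1, h.2⟩))
    · exact NCross_swap₂ (NCross_comm (hbit_core n Y X A B hY hX hA hB hxy hab hax
        (fun h => h2 ⟨h.1.symm, h.2.symm⟩)))
  · -- B < A, X < Y
    rw [min_eq_left hxy.le, max_eq_right hxy.le, min_eq_right hab.le, max_eq_left hab.le]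
    rcases le_total B X with hax | hax
    · exact NCross_swap₁ (hbit_core n B A X Y hB hA hX hY hab hxy hax
        (fun h => h2 ⟨h.2, h.1⟩))
    · exact NCross_swap₁ (NCross_comm (hbit_core n X Y B A hX hY hB hA hxy hab hax
        (fun h => h2 ⟨h.2.symm, h.1.symm⟩)))
  · -- B < A, Y < X
    rw [min_eq_right hxy.le, max_eq_left hxy.le, min_eq_right hab.le, max_eq_left hab.le]
    rcases le_total B Y with hax | hax
    · exact NCross_swap₁ (NCross_swap₂ (hbit_core n B A Y X hB hA hY hX hab hxy hax
        (fun h => h1 ⟨h.2, h.1⟩)))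
    · exact NCross_swap₁ (NCross_swap₂ (NCross_comm (hbit_core n Y X B A hY hX hB hA hxy hab hax
        (fun h => h1 ⟨h.2.symm, h.1.symm⟩))))


noncomputable def pp (m : ℕ) : ℝ × ℝ := ((m : ℝ), (m : ℝ) ^ 2)

lemma parab_mem {s t x : ℝ} (hst : s < t) (h1 : s < x) (h2 : x < t) :
    (x, (s + t) * x - s * t) ∈ openSegment ℝ ((s, s ^ 2) : ℝ × ℝ) (t, t ^ 2) := by
  have hts : t - s ≠ 0 := by intro h; nlinarith
  refine ⟨(t - x) / (t - s), (x - s) / (t - s),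
    div_pos (by linarith) (by linarith), div_pos (by linarith) (by linarith), ?_, ?_⟩
  · field_simp; ring
  · rw [Prod.ext_iff]
    constructor
    · show (t - x) / (t - s) * s + (x - s) / (t - s) * t = x
      field_simp; ring
    · show (t - x) / (t - s) * s ^ 2 + (x - s) / (t - s) * t ^ 2 = (s + t) * x - s * t
      field_simp; ring

lemma parab_cross {s u t v : ℝ} (h1 : s < u) (h2 : u < t) (h3 : t < v) :
    ((openSegment ℝ ((s, s^2) : ℝ × ℝ) (t, t^2)) ∩
      (openSegment ℝ ((u, u^2) : ℝ × ℝ) (v, v^2))).Nonempty := by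
  have hD : s + t - u - v < 0 := by linarith
  set x := (s * t - u * v) / (s + t - u - v) with hx
  have hux : u < x := by
    rw [hx, lt_div_iff_of_neg hD]
    nlinarith [mul_pos (sub_pos.2 h1) (sub_pos.2 h2)]
  have hxt : x < t := by
    rw [hx, div_lt_iff_of_neg hD]
    nlinarith [mul_pos (sub_pos.2 h2) (sub_pos.2 h3)]
  have key : (s + t) * x - s * t = (u + v) * x - u * v := by
    have hD' : s + t - u - v ≠ 0 := ne_of_lt hD
    have : (s + t - u - v) * x = s * t - u * v := by
      rw [hx]; field_simp
    linarith [this]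
  refine ⟨(x, (s + t) * x - s * t), parab_mem (by linarith) (by linarith) hxt, ?_⟩
  rw [key]
  exact parab_mem (by linarith) hux (by linarith)

lemma seg_minmax (i j : ℕ) :
    openSegment ℝ (pp (min i j)) (pp (max i j)) = openSegment ℝ (pp i) (pp j) := by
  rcases le_total i j with h | h
  · rw [min_eq_left h, max_eq_right h]
  · rw [min_eq_right h, max_eq_left h, openSegment_symm]

lemma cross_seg {i j k l : ℕ} (h : NCross i j k l) :
    ((openSegment ℝ (pp i) (pp j)) ∩ (openSegment ℝ (pp k) (pp l))).Nonempty := by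
  rcases h with ⟨h1, h2, h3⟩ | ⟨h1, h2, h3⟩
  · have := parab_cross (s := ((min i j : ℕ) : ℝ)) (u := ((min k l : ℕ) : ℝ))
      (t := ((max i j : ℕ) : ℝ)) (v := ((max k l : ℕ) : ℝ))
      (by exact_mod_cast h1) (by exact_mod_cast h2) (by exact_mod_cast h3)
    rwa [show (((min i j : ℕ) : ℝ), ((min i j : ℕ) : ℝ)^2) = pp (min i j) from rfl,
      show (((max i j : ℕ) : ℝ), ((max i j : ℕ) : ℝ)^2) = pp (max i j) from rfl,
      show (((min k l : ℕ) : ℝ), ((min k l : ℕ) : ℝ)^2) = pp (min k l) from rfl,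
      show (((max k l : ℕ) : ℝ), ((max k l : ℕ) : ℝ)^2) = pp (max k l) from rfl,
      seg_minmax, seg_minmax] at this
  · have := parab_cross (s := ((min k l : ℕ) : ℝ)) (u := ((min i j : ℕ) : ℝ))
      (t := ((max k l : ℕ) : ℝ)) (v := ((max i j : ℕ) : ℝ))
      (by exact_mod_cast h1) (by exact_mod_cast h2) (by exact_mod_cast h3)
    rw [show (((min i j : ℕ) : ℝ), ((min i j : ℕ) : ℝ)^2) = pp (min i j) from rfl,
      show (((max i j : ℕ) : ℝ), ((max i j : ℕ) : ℝ)^2) = pp (max i j) from rfl,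
      show (((min k l : ℕ) : ℝ), ((min k l : ℕ) : ℝ)^2) = pp (min k l) from rfl,
      show (((max k l : ℕ) : ℝ), ((max k l : ℕ) : ℝ)^2) = pp (max k l) from rfl,
      seg_minmax, seg_minmax] at this
    rw [Set.inter_comm]
    exact this

lemma pp_inj : Function.Injective pp := fun a b h => by
  have : (a : ℝ) = (b : ℝ) := congrArg Prod.fst h
  exact_mod_cast this

lemma pp_not_collinear {a b c : ℕ} (hab : a ≠ b) (hbc : b ≠ c) (hac : a ≠ c) :
    ¬ Collinear ℝ ({pp a, pp b, pp c} : Set (ℝ × ℝ)) := by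
  intro h
  rw [collinear_iff_of_mem (Set.mem_insert _ _)] at h
  obtain ⟨v, hv⟩ := h
  obtain ⟨r1, h1⟩ := hv (pp b) (by simp)
  obtain ⟨r2, h2⟩ := hv (pp c) (by simp)
  rw [Prod.ext_iff] at h1 h2
  have h11 : (b : ℝ) = r1 * v.1 + a := h1.1
  have h12 : (b : ℝ) ^ 2 = r1 * v.2 + (a : ℝ) ^ 2 := h1.2
  have h21 : (c : ℝ) = r2 * v.1 + a := h2.1
  have h22 : (c : ℝ) ^ 2 = r2 * v.2 + (a : ℝ) ^ 2 := h2.2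
  have hb1 : (b : ℝ) - a = r1 * v.1 := by linarith
  have hb2 : (b : ℝ) ^ 2 - (a : ℝ) ^ 2 = r1 * v.2 := by linarith
  have hc1 : (c : ℝ) - a = r2 * v.1 := by linarith
  have hc2 : (c : ℝ) ^ 2 - (a : ℝ) ^ 2 = r2 * v.2 := by linarith
  have key : ((b : ℝ) - a) * ((c : ℝ) ^ 2 - (a : ℝ) ^ 2)
      = ((c : ℝ) - a) * ((b : ℝ) ^ 2 - (a : ℝ) ^ 2) := by
    rw [hb1, hb2, hc1, hc2]; ring
  have hba : (b : ℝ) - a ≠ 0 := sub_ne_zero.2 (by exact_mod_cast hab.symm)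
  have hca : (c : ℝ) - a ≠ 0 := sub_ne_zero.2 (by exact_mod_cast hac.symm)
  have hcb : (c : ℝ) - b ≠ 0 := sub_ne_zero.2 (by exact_mod_cast hbc.symm)
  have : ((b : ℝ) - a) * (((c : ℝ) - a) * ((c : ℝ) - b)) = 0 := by linear_combination key
  exact (mul_ne_zero hba (mul_ne_zero hca hcb)) this


noncomputable section GeoAux

/-- Geometric realization of the complete graph on `Fin N` by points on a parabola. -/
def Kreal (N : ℕ) : GeomGraph (Fin N) where
  G := ⊤
  cross e₁ e₂ := ∃ a b c d : Fin N, e₁ = s(a, b) ∧ e₂ = s(c, d) ∧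
    a ≠ b ∧ c ≠ d ∧ a ≠ c ∧ a ≠ d ∧ b ≠ c ∧ b ≠ d ∧
    (openSegment ℝ (pp a.val) (pp b.val) ∩ openSegment ℝ (pp c.val) (pp d.val)).Nonempty
  cross_symm := by
    rintro e₁ e₂ ⟨a, b, c, d, rfl, rfl, h1, h2, h3, h4, h5, h6, hseg⟩
    exact ⟨c, d, a, b, rfl, rfl, h2, h1, h3.symm, h5.symm, h4.symm, h6.symm,
      by rwa [Set.inter_comm] at hseg⟩
  cross_mem := by
    rintro e₁ e₂ ⟨a, b, c, d, rfl, rfl, h1, h2, h3, h4, h5, h6, hseg⟩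
    constructor <;> simp [SimpleGraph.mem_edgeSet, h1, h2]
  cross_disjoint := by
    rintro e₁ e₂ ⟨a, b, c, d, rfl, rfl, h1, h2, h3, h4, h5, h6, hseg⟩ v hv
    rw [Sym2.mem_iff] at hv ⊢
    rcases hv with rfl | rfl
    · rintro (rfl | rfl); exacts [h3 rfl, h4 rfl]
    · rintro (rfl | rfl); exacts [h5 rfl, h6 rfl]

lemma Kreal_isRealization (N : ℕ) : IsRealizationOfK N (Kreal N) := by
  refine ⟨rfl, fun i => pp i.val, ?_, ?_, ?_⟩
  · intro i j h
    exact Fin.ext (pp_inj h)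
  · intro i j k hij hjk hik
    exact pp_not_collinear (fun h => hij (Fin.ext h)) (fun h => hjk (Fin.ext h))
      (fun h => hik (Fin.ext h))
  · intro a b c d hab hcd
    constructor
    · rintro ⟨a', b', c', d', he1, he2, h1, h2, h3, h4, h5, h6, hseg⟩
      rcases Sym2.eq_iff.1 he1 with ⟨rfl, rfl⟩ | ⟨rfl, rfl⟩ <;>
        rcases Sym2.eq_iff.1 he2 with ⟨rfl, rfl⟩ | ⟨rfl, rfl⟩
      · exact ⟨h3, h4, h5, h6, hseg⟩
      · rw [openSegment_symm ℝ (pp d.val) (pp c.val)] at hseg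
        exact ⟨h4, h3, h6, h5, hseg⟩
      · rw [openSegment_symm ℝ (pp b.val) (pp a.val)] at hseg
        exact ⟨h5, h6, h3, h4, hseg⟩
      · rw [openSegment_symm ℝ (pp b.val) (pp a.val),
          openSegment_symm ℝ (pp d.val) (pp c.val)] at hseg
        exact ⟨h6, h5, h4, h3, hseg⟩
    · rintro ⟨h1, h2, h3, h4, hseg⟩
      exact ⟨a, b, c, d, rfl, rfl, hab, hcd, h1, h2, h3, h4, hseg⟩

variable {V : Type*}

def liftmin {n : ℕ} (α : V → Fin n) : Sym2 V → ℕ :=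
  Sym2.lift ⟨fun a b => min (α a : ℕ) (α b : ℕ), fun a b => min_comm _ _⟩

def liftmax {n : ℕ} (α : V → Fin n) : Sym2 V → ℕ :=
  Sym2.lift ⟨fun a b => max (α a : ℕ) (α b : ℕ), fun a b => max_comm _ _⟩

open scoped Classical in
def bitOf (A : GeomGraph V) (n : ℕ) (α : V → Fin n) (v : V) : ℕ :=
  if h : ∃ q : Sym2 V × Sym2 V, A.cross q.1 q.2 ∧ v ∈ q.1 then
    hbit n (α v : ℕ) (α (Sym2.Mem.other h.choose_spec.2) : ℕ)
      (liftmin α h.choose.2) (liftmax α h.choose.2)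
  else 0

lemma bitOf_le_one (A : GeomGraph V) (n : ℕ) (α : V → Fin n) (v : V) :
    bitOf A n α v ≤ 1 := by
  unfold bitOf
  split
  · exact hbit_le_one _ _ _ _ _
  · omega

lemma bitOf_eq (A : GeomGraph V) (hindep : IndepCrossings A) (n : ℕ) (α : V → Fin n)
    {a b x y : V} (hc : A.cross s(a, b) s(x, y)) :
    bitOf A n α a
      = hbit n (α a : ℕ) (α b : ℕ) (min (α x : ℕ) (α y : ℕ)) (max (α x : ℕ) (α y : ℕ)) := by
  have hmem : a ∈ (s(a, b) : Sym2 V) := Sym2.mem_mk_left a b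
  have hex : ∃ q : Sym2 V × Sym2 V, A.cross q.1 q.2 ∧ a ∈ q.1 := ⟨(s(a, b), s(x, y)), hc, hmem⟩
  unfold bitOf
  rw [dif_pos hex]
  have hcq : A.cross hex.choose.1 hex.choose.2 := hex.choose_spec.1
  have hmq : a ∈ hex.choose.1 := hex.choose_spec.2
  have hkey : hex.choose.1 = s(a, b) ∧ hex.choose.2 = s(x, y) := by
    by_cases hor : (hex.choose.1 = s(a, b) ∧ hex.choose.2 = s(x, y)) ∨
        (hex.choose.1 = s(x, y) ∧ hex.choose.2 = s(a, b))
    · rcases hor with h | h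
      · exact h
      · exact absurd (h.1 ▸ hmq) (A.cross_disjoint _ _ hc a hmem)
    · exact absurd (Or.inl hmem)
        (hindep hex.choose.1 hex.choose.2 s(a, b) s(x, y) hcq hc hor a (Or.inl hmq))
  have hother : Sym2.Mem.other hex.choose_spec.2 = b :=
    Sym2.congr_right.1 ((Sym2.other_spec hex.choose_spec.2).trans hkey.1)
  rw [hother, hkey.2]
  rfl

end GeoAux

/-- If `G` has independent crossings and there is a homomorphism `α : G → K_n`
mapping no pair of crossing edges to the same edge, then `X(G) ≤ 2n`. -/
theorem geoChrom_le_two_mul {V : Type*} (A : GeomGraph V)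
    (hindep : IndepCrossings A) (n : ℕ) (α : V → Fin n)
    (hα : ∀ u v, A.G.Adj u v → α u ≠ α v)
    (hαc : ∀ e₁ e₂, A.cross e₁ e₂ → Sym2.map α e₁ ≠ Sym2.map α e₂) :
    geoChrom A ≤ 2 * n := by
  apply Nat.sInf_le
  refine ⟨Kreal (2 * n), Kreal_isRealization (2 * n),
    fun v => ⟨(α v : ℕ) + n * bitOf A n α v, by
      have h1 := (α v).isLt
      have h2 := bitOf_le_one A n α v
      rcases Nat.le_one_iff_eq_zero_or_eq_one.1 h2 with h | h <;> rw [h] <;> omega⟩, ?_, ?_⟩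
  · -- adjacency
    intro u v huv
    have h1 := (α u).isLt
    have h2 := (α v).isLt
    have h3 := bitOf_le_one A n α u
    have h4 := bitOf_le_one A n α v
    have h5 : (α u : ℕ) ≠ (α v : ℕ) := fun h => hα u v huv (Fin.ext h)
    show _ ≠ _
    intro heq
    have hval := congrArg Fin.val heq
    simp only at hval
    rcases Nat.le_one_iff_eq_zero_or_eq_one.1 h3 with h | h <;>
      rcases Nat.le_one_iff_eq_zero_or_eq_one.1 h4 with h' | h' <;>
      rw [h, h'] at hval <;> omega
  · -- crossings
    intro e₁ e₂ hc
    revert hc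
    refine Sym2.inductionOn₂ e₁ e₂ ?_
    intro a b x y hc
    have hadjab : A.G.Adj a b := (SimpleGraph.mem_edgeSet _).1 (A.cross_mem _ _ hc).1
    have hadjxy : A.G.Adj x y := (SimpleGraph.mem_edgeSet _).1 (A.cross_mem _ _ hc).2
    have hab : (α a : ℕ) ≠ (α b : ℕ) := fun h => hα a b hadjab (Fin.ext h)
    have hxy : (α x : ℕ) ≠ (α y : ℕ) := fun h => hα x y hadjxy (Fin.ext h)
    have hmap := hαc s(a, b) s(x, y) hc
    rw [Sym2.map_pair_eq, Sym2.map_pair_eq] at hmap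
    have h1 : ¬((α a : ℕ) = (α x : ℕ) ∧ (α b : ℕ) = (α y : ℕ)) :=
      fun h => hmap (Sym2.eq_iff.2 (Or.inl ⟨Fin.ext h.1, Fin.ext h.2⟩))
    have h2 : ¬((α a : ℕ) = (α y : ℕ) ∧ (α b : ℕ) = (α x : ℕ)) :=
      fun h => hmap (Sym2.eq_iff.2 (Or.inr ⟨Fin.ext h.1, Fin.ext h.2⟩))
    have hcba : A.cross s(b, a) s(x, y) := by rwa [Sym2.eq_swap]
    have hcs : A.cross s(x, y) s(a, b) := A.cross_symm _ _ hc
    have hcyx : A.cross s(y, x) s(a, b) := by rwa [Sym2.eq_swap]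
    have hba := bitOf_eq A hindep n α hc
    have hbb := bitOf_eq A hindep n α hcba
    have hbx := bitOf_eq A hindep n α hcs
    have hby := bitOf_eq A hindep n α hcyx
    have hN := hpos_cross n (α a : ℕ) (α b : ℕ) (α x : ℕ) (α y : ℕ)
      (α a).isLt (α b).isLt (α x).isLt (α y).isLt hab hxy h1 h2
    rw [← hba, ← hbb, ← hbx, ← hby] at hN
    rw [Sym2.map_pair_eq, Sym2.map_pair_eq]
    have hd : ((α a : ℕ) + n * bitOf A n α a) ≠ ((α b : ℕ) + n * bitOf A n α b) ∧
        ((α x : ℕ) + n * bitOf A n α x) ≠ ((α y : ℕ) + n * bitOf A n α y) ∧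
        ((α a : ℕ) + n * bitOf A n α a) ≠ ((α x : ℕ) + n * bitOf A n α x) ∧
        ((α a : ℕ) + n * bitOf A n α a) ≠ ((α y : ℕ) + n * bitOf A n α y) ∧
        ((α b : ℕ) + n * bitOf A n α b) ≠ ((α x : ℕ) + n * bitOf A n α x) ∧
        ((α b : ℕ) + n * bitOf A n α b) ≠ ((α y : ℕ) + n * bitOf A n α y) := by
      unfold NCross at hN; omega
    refine ⟨_, _, _, _, rfl, rfl,
      fun h => hd.1 (congrArg Fin.val h),
      fun h => hd.2.1 (congrArg Fin.val h),
      fun h => hd.2.2.1 (congrArg Fin.val h),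
      fun h => hd.2.2.2.1 (congrArg Fin.val h),
      fun h => hd.2.2.2.2.1 (congrArg Fin.val h),
      fun h => hd.2.2.2.2.2 (congrArg Fin.val h),
      cross_seg hN⟩
end

section
/- Let G be a geometric graph in which every two distinct crossings are vertex-disjoint (independent crossings). Then X(G) ≤ 3·χ(G), where χ(G) is the chromatic number of the underlying abstract graph. -/
/-!
Colour `G` properly with `k` colours and send a vertex `v` of colour `c v` to the point
`k * r v + c v` of the convex `K_{3k}`, where the layer `r v ∈ {0, 1, 2}` is chosen per crossing.
For a crossing `ab`, `xy` with `c a < c b`, `c x < c y` and `c a ≤ c x`, the layers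
`r a = 0`, `r b = 1`, `r y = 2` and `r x = 0` (or `1` if `c x = c a`) place the images in the
interleaved order `a < x < b < y`, so the image edges cross. Since crossings are
vertex-disjoint, these local choices do not conflict.
-/

lemma not_collinear_parabola {a b c : ℝ} (hab : a ≠ b) (hbc : b ≠ c) (hac : a ≠ c) :
    ¬ Collinear ℝ ({(a, a ^ 2), (b, b ^ 2), (c, c ^ 2)} : Set (ℝ × ℝ)) := by
  rw [collinear_iff_of_mem (Set.mem_insert _ _)]
  rintro ⟨v, hv⟩
  obtain ⟨s, hs⟩ := hv (b, b ^ 2) (by simp)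
  obtain ⟨t, ht⟩ := hv (c, c ^ 2) (by simp)
  simp only [Prod.ext_iff, vadd_eq_add, Prod.fst_add, Prod.snd_add, Prod.smul_fst,
    Prod.smul_snd, smul_eq_mul] at hs ht
  have hdet : (b - a) * (c - a) * (c - b) = 0 := by
    linear_combination (c ^ 2 - a ^ 2) * hs.1 + s * v.1 * ht.2 - (b ^ 2 - a ^ 2) * ht.1
      - t * v.1 * hs.2
  simp only [mul_eq_zero, sub_eq_zero] at hdet
  rcases hdet with (h | h) | h
  exacts [hab h.symm, hac h.symm, hbc h.symm]

lemma mem_openSegment_parabola {s t x : ℝ} (hsx : s < x) (hxt : x < t) :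
    ((x, (s + t) * x - s * t) : ℝ × ℝ) ∈ openSegment ℝ ((s, s ^ 2) : ℝ × ℝ) (t, t ^ 2) := by
  have hts : t - s ≠ 0 := by linarith
  refine ⟨(t - x) / (t - s), (x - s) / (t - s), div_pos (by linarith) (by linarith),
    div_pos (by linarith) (by linarith), by field_simp; ring, ?_⟩
  ext <;> simp only [Prod.smul_fst, Prod.smul_snd, Prod.fst_add, Prod.snd_add, smul_eq_mul] <;>
    field_simp <;> ring

lemma openSegment_parabola_inter_nonempty {a b c d : ℝ} (hab : a < b) (hbc : b < c)
    (hcd : c < d) :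
    (openSegment ℝ ((a, a ^ 2) : ℝ × ℝ) (c, c ^ 2) ∩
      openSegment ℝ ((b, b ^ 2) : ℝ × ℝ) (d, d ^ 2)).Nonempty := by
  have hden : 0 < b + d - a - c := by linarith
  -- where the chord lines `y = (a + c) x - a c` and `y = (b + d) x - b d` meet
  set x := (b * d - a * c) / (b + d - a - c) with hx
  have hax : a < x := by
    rw [hx, lt_div_iff₀ hden]
    nlinarith [mul_pos (sub_pos.2 hab) (sub_pos.2 (hab.trans (hbc.trans hcd)))]
  have hxc : x < c := by
    rw [hx, div_lt_iff₀ hden]; nlinarith [mul_pos (sub_pos.2 hcd) (sub_pos.2 hbc)]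
  have hbx : b < x := by
    rw [hx, lt_div_iff₀ hden]; nlinarith [mul_pos (sub_pos.2 hab) (sub_pos.2 hbc)]
  have hxd : x < d := by
    rw [hx, div_lt_iff₀ hden]
    nlinarith [mul_pos (sub_pos.2 (hab.trans (hbc.trans hcd))) (sub_pos.2 hcd)]
  have hmeet : (a + c) * x - a * c = (b + d) * x - b * d := by
    rw [hx]; field_simp; ring
  refine ⟨(x, (a + c) * x - a * c), mem_openSegment_parabola hax hxc, ?_⟩
  rw [hmeet]
  exact mem_openSegment_parabola hbx hxd

def straightLineK {n : ℕ} (p : Fin n → ℝ × ℝ) : GeomGraph (Fin n) where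
  G := ⊤
  cross e₁ e₂ := ∃ a b c d, e₁ = s(a, b) ∧ e₂ = s(c, d) ∧ a ≠ b ∧ c ≠ d ∧
    a ≠ c ∧ a ≠ d ∧ b ≠ c ∧ b ≠ d ∧
    (openSegment ℝ (p a) (p b) ∩ openSegment ℝ (p c) (p d)).Nonempty
  cross_symm := by
    rintro _ _ ⟨a, b, c, d, rfl, rfl, hab, hcd, hac, had, hbc, hbd, hseg⟩
    exact ⟨c, d, a, b, rfl, rfl, hcd, hab, hac.symm, hbc.symm, had.symm, hbd.symm,
      Set.inter_comm _ _ ▸ hseg⟩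
  cross_mem := by
    rintro _ _ ⟨a, b, c, d, rfl, rfl, hab, hcd, -⟩
    exact ⟨hab, hcd⟩
  cross_disjoint := by
    rintro _ _ ⟨a, b, c, d, rfl, rfl, -, -, hac, had, hbc, hbd, -⟩ v hv hv'
    rcases Sym2.mem_iff.1 hv with rfl | rfl <;> rcases Sym2.mem_iff.1 hv' with rfl | rfl <;>
      contradiction

lemma openSegment_eq_of_sym2_eq {α : Type*} (p : α → ℝ × ℝ) {a b c d : α}
    (h : s(a, b) = s(c, d)) : openSegment ℝ (p a) (p b) = openSegment ℝ (p c) (p d) := by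
  rcases Sym2.eq_iff.1 h with ⟨rfl, rfl⟩ | ⟨rfl, rfl⟩
  exacts [rfl, openSegment_symm ℝ _ _]

lemma straightLineK_cross_iff {n : ℕ} (p : Fin n → ℝ × ℝ) {a b c d : Fin n} (hab : a ≠ b)
    (hcd : c ≠ d) :
    (straightLineK p).cross s(a, b) s(c, d) ↔ a ≠ c ∧ a ≠ d ∧ b ≠ c ∧ b ≠ d ∧
      (openSegment ℝ (p a) (p b) ∩ openSegment ℝ (p c) (p d)).Nonempty := by
  refine ⟨fun hcross => ?_, fun ⟨hac, had, hbc, hbd, hseg⟩ =>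
    ⟨a, b, c, d, rfl, rfl, hab, hcd, hac, had, hbc, hbd, hseg⟩⟩
  have hdisj := (straightLineK p).cross_disjoint _ _ hcross
  obtain ⟨a', b', c', d', h₁, h₂, -, -, -, -, -, -, hseg⟩ := hcross
  refine ⟨?_, ?_, ?_, ?_, ?_⟩
  · rintro rfl; exact hdisj a (Sym2.mem_mk_left _ _) (Sym2.mem_mk_left _ _)
  · rintro rfl; exact hdisj a (Sym2.mem_mk_left _ _) (Sym2.mem_mk_right _ _)
  · rintro rfl; exact hdisj b (Sym2.mem_mk_right _ _) (Sym2.mem_mk_left _ _)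
  · rintro rfl; exact hdisj b (Sym2.mem_mk_right _ _) (Sym2.mem_mk_right _ _)
  · rwa [openSegment_eq_of_sym2_eq p h₁, openSegment_eq_of_sym2_eq p h₂]

lemma isRealizationOfK_straightLineK {n : ℕ} {p : Fin n → ℝ × ℝ} (hp : Function.Injective p)
    (hgen : ∀ i j k : Fin n, i ≠ j → j ≠ k → i ≠ k →
      ¬ Collinear ℝ ({p i, p j, p k} : Set (ℝ × ℝ))) :
    IsRealizationOfK n (straightLineK p) :=
  ⟨rfl, p, hp, hgen, fun _ _ _ _ => straightLineK_cross_iff p⟩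

def parabolaPoint {n : ℕ} (i : Fin n) : ℝ × ℝ := ((i : ℕ), ((i : ℕ) : ℝ) ^ 2)

/-- Points on a parabola are in convex position, so this is the convex realization of `K_n`. -/
def convexK (n : ℕ) : GeomGraph (Fin n) := straightLineK (parabolaPoint (n := n))

lemma isRealizationOfK_convexK (n : ℕ) : IsRealizationOfK n (convexK n) := by
  have hcast : Function.Injective fun i : Fin n => ((i : ℕ) : ℝ) :=
    Nat.cast_injective.comp Fin.val_injective
  refine isRealizationOfK_straightLineK (fun i j h => hcast (congrArg Prod.fst h)) ?_
  intro i j k hij hjk hik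
  exact not_collinear_parabola (hcast.ne hij) (hcast.ne hjk) (hcast.ne hik)

lemma convexK_cross_of_lt {n : ℕ} {w x y z : Fin n} (hwx : w < x) (hxy : x < y) (hyz : y < z) :
    (convexK n).cross s(w, y) s(x, z) := by
  refine (straightLineK_cross_iff _ (hwx.trans hxy).ne (hxy.trans hyz).ne).2
    ⟨hwx.ne, (hwx.trans (hxy.trans hyz)).ne, hxy.ne', hyz.ne, ?_⟩
  apply openSegment_parabola_inter_nonempty <;> exact_mod_cast ‹_›

lemma SimpleGraph.Coloring.exists_eq_mk_lt {V α : Type*} [LinearOrder α] {G : SimpleGraph V}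
    (C : G.Coloring α) {e : Sym2 V} (he : e ∈ G.edgeSet) : ∃ a b, e = s(a, b) ∧ C a < C b := by
  induction e using Sym2.ind with | _ a b => ?_
  rcases (C.valid he).lt_or_gt with hab | hba
  exacts [⟨a, b, rfl, hab⟩, ⟨b, a, Sym2.eq_swap, hba⟩]

namespace IndepCrossings

variable {V : Type*} {A : GeomGraph V}

lemma sym2_eq (hA : IndepCrossings A) {e₁ e₂ f₁ f₂ : Sym2 V} {v : V} (he : A.cross e₁ e₂)
    (hf : A.cross f₁ f₂) (hve : v ∈ e₁ ∨ v ∈ e₂) (hvf : v ∈ f₁ ∨ v ∈ f₂) :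
    s(e₁, e₂) = s(f₁, f₂) := by
  by_contra hne
  exact hA e₁ e₂ f₁ f₂ he hf (Sym2.eq_iff.not.1 hne) v hve hvf

lemma exists_forall_cross {α : Type*} [Nonempty α] (hA : IndepCrossings A)
    (P : Sym2 V → Sym2 V → (V → α) → Prop) (hP_symm : ∀ e₁ e₂ g, P e₁ e₂ g → P e₂ e₁ g)
    (hP_congr : ∀ e₁ e₂ g g', (∀ v, v ∈ e₁ ∨ v ∈ e₂ → g v = g' v) → P e₁ e₂ g → P e₁ e₂ g')
    (hP : ∀ e₁ e₂, A.cross e₁ e₂ → ∃ g, P e₁ e₂ g) :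
    ∃ g : V → α, ∀ e₁ e₂, A.cross e₁ e₂ → P e₁ e₂ g := by
  have hcrossing : ∀ v : V, ∃ X : Sym2 (Sym2 V),
      ∀ e₁ e₂, A.cross e₁ e₂ → (v ∈ e₁ ∨ v ∈ e₂) → s(e₁, e₂) = X := by
    intro v
    by_cases h : ∃ f₁ f₂, A.cross f₁ f₂ ∧ (v ∈ f₁ ∨ v ∈ f₂)
    · obtain ⟨f₁, f₂, hf, hvf⟩ := h
      exact ⟨s(f₁, f₂), fun e₁ e₂ he hve => hA.sym2_eq he hf hve hvf⟩
    · exact ⟨s(s(v, v), s(v, v)), fun e₁ e₂ he hve => (h ⟨e₁, e₂, he, hve⟩).elim⟩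
  have hsolution : ∀ X : Sym2 (Sym2 V), ∃ g : V → α,
      ∀ e₁ e₂, s(e₁, e₂) = X → A.cross e₁ e₂ → P e₁ e₂ g := by
    intro X
    by_cases h : ∃ f₁ f₂, s(f₁, f₂) = X ∧ A.cross f₁ f₂
    · obtain ⟨f₁, f₂, rfl, hf⟩ := h
      obtain ⟨g, hg⟩ := hP f₁ f₂ hf
      refine ⟨g, fun e₁ e₂ he _ => ?_⟩
      rcases Sym2.eq_iff.1 he with ⟨rfl, rfl⟩ | ⟨rfl, rfl⟩
      exacts [hg, hP_symm _ _ _ hg]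
    · exact ⟨fun _ => Classical.arbitrary α, fun e₁ e₂ hX he => (h ⟨e₁, e₂, hX, he⟩).elim⟩
  -- one local solution per unordered crossing; each vertex reads it off its unique crossing
  choose X hX using hcrossing
  choose g hg using hsolution
  refine ⟨fun v => g (X v) v, fun e₁ e₂ he => hP_congr _ _ _ _ (fun v hv => ?_) (hg _ e₁ e₂ rfl he)⟩
  rw [hX v e₁ e₂ he hv]

end IndepCrossings

section Layers

variable {V : Type*} {A : GeomGraph V} {k : ℕ}

def layered (C : A.G.Coloring (Fin k)) (r : V → Fin 3) (v : V) : Fin (3 * k) :=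
  finProdFinEquiv (r v, C v)

lemma layered_val (C : A.G.Coloring (Fin k)) (r : V → Fin 3) (v : V) :
    (layered C r v : ℕ) = C v + k * r v :=
  rfl

lemma layered_ne_of_adj (C : A.G.Coloring (Fin k)) (r : V → Fin 3) {u v : V}
    (huv : A.G.Adj u v) : layered C r u ≠ layered C r v :=
  fun h => C.valid huv (congrArg Prod.snd (finProdFinEquiv.injective h))

lemma map_layered_congr (C : A.G.Coloring (Fin k)) {r r' : V → Fin 3} {e : Sym2 V}
    (h : ∀ v ∈ e, r v = r' v) : e.map (layered C r) = e.map (layered C r') :=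
  Sym2.map_congr fun v hv => by rw [layered, layered, h v hv]

lemma exists_layers_cross_of_le (C : A.G.Coloring (Fin k)) {a b x y : V}
    (h : A.cross s(a, b) s(x, y)) (hab : C a < C b) (hxy : C x < C y) (hax : C a ≤ C x) :
    ∃ r : V → Fin 3, (convexK (3 * k)).cross s(layered C r a, layered C r b)
      s(layered C r x, layered C r y) := by
  classical
  have hdisj := A.cross_disjoint _ _ h
  have hba : b ≠ a := fun he => hab.ne' (congrArg C he)
  have hxa : x ≠ a := fun he => hdisj a (Sym2.mem_mk_left _ _) (he ▸ Sym2.mem_mk_left _ _)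
  have hxb : x ≠ b := fun he => hdisj b (Sym2.mem_mk_right _ _) (he ▸ Sym2.mem_mk_left _ _)
  have hya : y ≠ a := fun he => hdisj a (Sym2.mem_mk_left _ _) (he ▸ Sym2.mem_mk_right _ _)
  have hyb : y ≠ b := fun he => hdisj b (Sym2.mem_mk_right _ _) (he ▸ Sym2.mem_mk_right _ _)
  have hyx : y ≠ x := fun he => hxy.ne' (congrArg C he)
  let r : V → Fin 3 := fun v =>
    if v = a then 0 else if v = b then 1 else if v = x then (if C a < C x then 0 else 1) else 2
  have hra : r a = 0 := if_pos rfl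
  have hrb : r b = 1 := by simp [r, hba]
  have hrx : (r x : ℕ) = if (C a : ℕ) < C x then 0 else 1 := by
    simp only [r, if_neg hxa, if_neg hxb, Fin.lt_def]
    split_ifs <;> rfl
  have hry : r y = 2 := by simp [r, hya, hyb, hyx]
  have hCa := (C a).isLt
  have hCb := (C b).isLt
  have hCx := (C x).isLt
  rw [Fin.lt_def] at hab hxy
  rw [Fin.le_def] at hax
  refine ⟨r, convexK_cross_of_lt (x := layered C r x) ?_ ?_ ?_⟩ <;>
    simp only [Fin.lt_def, layered_val, hra, hrb, hrx, hry, Fin.val_zero, Fin.val_one,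
      Fin.val_two] <;> (try split_ifs) <;> omega

lemma exists_layers_cross_of_lt (C : A.G.Coloring (Fin k)) {a b x y : V}
    (h : A.cross s(a, b) s(x, y)) (hab : C a < C b) (hxy : C x < C y) :
    ∃ r : V → Fin 3, (convexK (3 * k)).cross s(layered C r a, layered C r b)
      s(layered C r x, layered C r y) := by
  rcases le_total (C a) (C x) with hax | hxa
  · exact exists_layers_cross_of_le C h hab hxy hax
  · obtain ⟨r, hr⟩ := exists_layers_cross_of_le C (A.cross_symm _ _ h) hxy hab hxa
    exact ⟨r, (convexK _).cross_symm _ _ hr⟩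

lemma exists_layers_cross (C : A.G.Coloring (Fin k)) {e₁ e₂ : Sym2 V} (h : A.cross e₁ e₂) :
    ∃ r : V → Fin 3, (convexK (3 * k)).cross (e₁.map (layered C r)) (e₂.map (layered C r)) := by
  obtain ⟨a, b, rfl, hab⟩ := C.exists_eq_mk_lt (A.cross_mem _ _ h).1
  obtain ⟨x, y, rfl, hxy⟩ := C.exists_eq_mk_lt (A.cross_mem _ _ h).2
  exact exists_layers_cross_of_lt C h hab hxy

end Layers

lemma IndepCrossings.three_mul_mem_geoSet {V : Type*} {A : GeomGraph V} {k : ℕ}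
    (hA : IndepCrossings A) (hk : A.G.Colorable k) : 3 * k ∈ geoSet A := by
  obtain ⟨C⟩ := hk
  obtain ⟨r, hr⟩ := hA.exists_forall_cross
    (fun e₁ e₂ r => (convexK (3 * k)).cross (e₁.map (layered C r)) (e₂.map (layered C r)))
    (fun _ _ _ => (convexK (3 * k)).cross_symm _ _)
    (fun _ _ _ _ hrr' hr => by
      rwa [map_layered_congr C fun v hv => hrr' v (Or.inl hv),
        map_layered_congr C fun v hv => hrr' v (Or.inr hv)] at hr)
    (fun _ _ h => exists_layers_cross C h)
  exact ⟨convexK (3 * k), isRealizationOfK_convexK _, layered C r,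
    fun _ _ huv => layered_ne_of_adj C r huv, hr⟩

/-- If `G` has independent crossings, then `X(G) ≤ 3 χ(G)`. -/
theorem geoChrom_le_three_mul_chromaticNumber {V : Type*} (A : GeomGraph V)
    (hindep : IndepCrossings A) :
    (geoChrom A : ℕ∞) ≤ 3 * A.G.chromaticNumber := by
  by_cases htop : A.G.chromaticNumber = ⊤
  · simp [htop]
  obtain ⟨m, hm⟩ := ENat.ne_top_iff_exists.1 htop
  have hcol : A.G.Colorable m := SimpleGraph.chromaticNumber_le_iff_colorable.1 hm.ge
  rw [← hm]
  exact_mod_cast Nat.sInf_le (hindep.three_mul_mem_geoSet hcol)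
end
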